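/- arXiv:1308.1148 — 5 statements merged into one kernel-verified Lean document; each statement's English description precedes it below -/
import Mathlib

section
/- Chamber description for a 2/3-link: for the torus T = (ℂ*)^ℓ acting on the affine space with coordinates r_{j,k}, r'_{j,k} (1 ≤ j ≤ ℓ−1, 0 ≤ k ≤ 2), s_k (0 ≤ k ≤ 3), c, and n_j (0 ≤ j ≤ ℓ−1), with weights r_{j,k} ↦ t_j^{k−4} r_{j,k}, r'_{j,k} ↦ t_j^{4−k} r'_{j,k}, s_k ↦ t_ℓ^{2k−10} s_k, c ↦ t_ℓ c, n₀ ↦ t₁ n₀, n_j ↦ t_j^{−1} t_{j+1} n_j for 0 < j < ℓ, and the character χ(t) = t_ℓ: the set of points x admitting a one-parameter subgroup λ ∈ ℤ^ℓ with ⟨χ,λ⟩ > 0 whose limit on x exists equals the vanishing locus V(s₀, s₁, s₂, s₃); and the set of points admitting such a λ with ⟨χ,λ⟩ < 0 equals the union over j = 0, …, ℓ−1 of V(n_j, r'_{j+1,•}, r'_{j+2,•}, …, r'_{ℓ−1,•}, c). -/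
/-- Coordinates on the miniversal deformation space of a 2/3-link of length `ℓ`:
rosary coordinates `r (j, k)` and `r' (j, k)` for `1 ≤ j ≤ ℓ-1` (encoded by
`j : Fin (ℓ-1)` with value `j+1`) and `0 ≤ k ≤ 2`, singularity coordinates `s k`
(`0 ≤ k ≤ 3`), the crimping coordinate `c`, and node coordinates `n j`
(`0 ≤ j ≤ ℓ-1`). -/
inductive LinkCoord23 (ℓ : ℕ) : Type
  | r (j : Fin (ℓ - 1)) (k : Fin 3)
  | r' (j : Fin (ℓ - 1)) (k : Fin 3)
  | s (k : Fin 4)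
  | c
  | n (j : Fin ℓ)

/-- The weight in `ℤ^ℓ` (characters of `T = (ℂ*)^ℓ`, with `i : Fin ℓ` encoding `t_{i+1}`)
of each coordinate: `r_{j,k} ↦ t_j^{k-4} r_{j,k}`, `r'_{j,k} ↦ t_j^{4-k} r'_{j,k}`,
`s_k ↦ t_ℓ^{2k-10} s_k`, `c ↦ t_ℓ c`, `n_0 ↦ t_1 n_0`, and
`n_j ↦ t_j⁻¹ t_{j+1} n_j` for `0 < j < ℓ`. -/
def linkWeight23 (ℓ : ℕ) : LinkCoord23 ℓ → Fin ℓ → ℤ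
  | .r j k => fun i => if (i : ℕ) = (j : ℕ) then (k : ℤ) - 4 else 0
  | .r' j k => fun i => if (i : ℕ) = (j : ℕ) then 4 - (k : ℤ) else 0
  | .s k => fun i => if (i : ℕ) = ℓ - 1 then 2 * (k : ℤ) - 10 else 0
  | .c => fun i => if (i : ℕ) = ℓ - 1 then 1 else 0
  | .n j => fun i =>
      if (j : ℕ) = 0 then (if (i : ℕ) = 0 then 1 else 0)
      else if (i : ℕ) = (j : ℕ) - 1 then -1
      else if (i : ℕ) = (j : ℕ) then 1 else 0

/-- The character `χ(t) = t_ℓ`. -/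
def linkChi23 (ℓ : ℕ) : Fin ℓ → ℤ := fun i => if (i : ℕ) = ℓ - 1 then 1 else 0

lemma sum_ind {ℓ : ℕ} (m : ℕ) (h : m < ℓ) (v : ℤ) (l : Fin ℓ → ℤ) :
    ∑ i : Fin ℓ, (if (i : ℕ) = m then v else 0) * l i = v * l ⟨m, h⟩ := by
  rw [Finset.sum_eq_single (⟨m, h⟩ : Fin ℓ)]
  · simp
  · intro b _ hb
    have : (b : ℕ) ≠ m := fun hc => hb (Fin.ext hc)
    simp [this]
  · simp

lemma sum_pair {ℓ : ℕ} (m : ℕ) (h : m + 1 < ℓ) (h' : m < ℓ) (l : Fin ℓ → ℤ) :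
    ∑ i : Fin ℓ, (if (i : ℕ) = m then (-1 : ℤ) else if (i : ℕ) = m + 1 then 1 else 0) * l i
      = l ⟨m + 1, h⟩ - l ⟨m, h'⟩ := by
  have key : ∀ i : Fin ℓ,
      (if (i : ℕ) = m then (-1 : ℤ) else if (i : ℕ) = m + 1 then 1 else 0) * l i
      = (if (i : ℕ) = m then (-1 : ℤ) else 0) * l i + (if (i : ℕ) = m + 1 then (1 : ℤ) else 0) * l i := by
    intro i
    by_cases h1 : (i : ℕ) = m
    · have h2 : (i : ℕ) ≠ m + 1 := by omega
      simp [h1, h2]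
    · by_cases h2 : (i : ℕ) = m + 1 <;> simp [h1, h2]
  rw [Finset.sum_congr rfl (fun i _ => key i), Finset.sum_add_distrib,
    sum_ind m h' (-1) l, sum_ind (m+1) h 1 l]
  ring

lemma sum_chi {ℓ : ℕ} (h : ℓ - 1 < ℓ) (l : Fin ℓ → ℤ) :
    ∑ i : Fin ℓ, linkChi23 ℓ i * l i = l ⟨ℓ - 1, h⟩ := by
  simp only [linkChi23]
  rw [sum_ind (ℓ-1) h 1 l, one_mul]

lemma sum_w_r {ℓ : ℕ} (j : Fin (ℓ - 1)) (k : Fin 3) (h : (j : ℕ) < ℓ) (l : Fin ℓ → ℤ) :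
    ∑ i : Fin ℓ, linkWeight23 ℓ (.r j k) i * l i = ((k : ℤ) - 4) * l ⟨(j : ℕ), h⟩ := by
  simp only [linkWeight23]
  rw [sum_ind (j : ℕ) h _ l]

lemma sum_w_r' {ℓ : ℕ} (j : Fin (ℓ - 1)) (k : Fin 3) (h : (j : ℕ) < ℓ) (l : Fin ℓ → ℤ) :
    ∑ i : Fin ℓ, linkWeight23 ℓ (.r' j k) i * l i = (4 - (k : ℤ)) * l ⟨(j : ℕ), h⟩ := by
  simp only [linkWeight23]
  rw [sum_ind (j : ℕ) h _ l]

lemma sum_w_s {ℓ : ℕ} (k : Fin 4) (h : ℓ - 1 < ℓ) (l : Fin ℓ → ℤ) :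
    ∑ i : Fin ℓ, linkWeight23 ℓ (.s k) i * l i = (2 * (k : ℤ) - 10) * l ⟨ℓ - 1, h⟩ := by
  simp only [linkWeight23]
  rw [sum_ind (ℓ - 1) h _ l]

lemma sum_w_c {ℓ : ℕ} (h : ℓ - 1 < ℓ) (l : Fin ℓ → ℤ) :
    ∑ i : Fin ℓ, linkWeight23 ℓ .c i * l i = l ⟨ℓ - 1, h⟩ := by
  simp only [linkWeight23]
  rw [sum_ind (ℓ - 1) h 1 l, one_mul]

lemma sum_w_n0 {ℓ : ℕ} (j : Fin ℓ) (hj : (j : ℕ) = 0) (l : Fin ℓ → ℤ) :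
    ∑ i : Fin ℓ, linkWeight23 ℓ (.n j) i * l i = l j := by
  simp only [linkWeight23, if_pos hj]
  rw [sum_ind 0 j.pos 1 l, one_mul]
  congr 1
  exact Fin.ext hj.symm

lemma sum_w_n {ℓ : ℕ} (j : Fin ℓ) (hj : (j : ℕ) ≠ 0) (h' : (j : ℕ) - 1 < ℓ) (l : Fin ℓ → ℤ) :
    ∑ i : Fin ℓ, linkWeight23 ℓ (.n j) i * l i = l j - l ⟨(j : ℕ) - 1, h'⟩ := by
  simp only [linkWeight23, if_neg hj]
  have hrw : (j : ℕ) = ((j : ℕ) - 1) + 1 := by omega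
  have hlt : (j : ℕ) - 1 + 1 < ℓ := by have := j.isLt; omega
  have key := sum_pair ((j : ℕ) - 1) hlt h' l
  have e : (⟨(j : ℕ) - 1 + 1, hlt⟩ : Fin ℓ) = j := Fin.ext (by simp; omega)
  rw [e] at key
  rw [show (∑ i : Fin ℓ, (if (i : ℕ) = (j : ℕ) - 1 then (-1:ℤ) else if (i : ℕ) = (j : ℕ) then 1 else 0) * l i)
      = ∑ i : Fin ℓ, (if (i : ℕ) = (j : ℕ) - 1 then (-1:ℤ) else if (i : ℕ) = ((j : ℕ) - 1) + 1 then 1 else 0) * l i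
    from by rw [← hrw], key]

/-- **Chamber description for a 2/3-link.**  For the diagonal action of `T = (ℂ*)^ℓ`
with the weights `linkWeight23` and character `χ = t_ℓ`: a point `x` admits a
one-parameter subgroup `l` with `⟨χ, l⟩ > 0` whose limit on `x` exists (i.e. every
coordinate in the support of `x` has nonnegative `l`-weight) if and only if
`x ∈ V(s₀, s₁, s₂, s₃)`; and `x` admits such an `l` with `⟨χ, l⟩ < 0` if and only if
`x ∈ ⋃_{j=0}^{ℓ-1} V(n_j, r'_{j+1,•}, …, r'_{ℓ-1,•}, c)`. -/
theorem chambers_two_thirds_link (ℓ : ℕ) (hℓ : 1 ≤ ℓ) (x : LinkCoord23 ℓ → ℂ) :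
    ((∃ l : Fin ℓ → ℤ, 0 < ∑ i, linkChi23 ℓ i * l i ∧
        ∀ a : LinkCoord23 ℓ, x a ≠ 0 → 0 ≤ ∑ i, linkWeight23 ℓ a i * l i) ↔
      ∀ k : Fin 4, x (.s k) = 0) ∧
    ((∃ l : Fin ℓ → ℤ, (∑ i, linkChi23 ℓ i * l i) < 0 ∧
        ∀ a : LinkCoord23 ℓ, x a ≠ 0 → 0 ≤ ∑ i, linkWeight23 ℓ a i * l i) ↔
      ∃ j : Fin ℓ, x (.n j) = 0 ∧
        (∀ j' : Fin (ℓ - 1), (j : ℕ) ≤ (j' : ℕ) → ∀ k : Fin 3, x (.r' j' k) = 0) ∧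
        x .c = 0) := by
  have hlast : ℓ - 1 < ℓ := by omega
  constructor
  · constructor
    · rintro ⟨l, hpos, hx⟩ k
      by_contra hk
      have h := hx (.s k) hk
      rw [sum_w_s k hlast l] at h
      rw [sum_chi hlast l] at hpos
      have hk4 : (k : ℤ) ≤ 3 := by have := k.isLt; omega
      nlinarith
    · intro hs
      refine ⟨fun i => if (i : ℕ) = ℓ - 1 then 1 else 0, ?_, ?_⟩
      · rw [sum_chi hlast]
        simp
      · intro a ha
        cases a with
        | r j' k =>
          have hj' : (j' : ℕ) < ℓ := by have := j'.isLt; omega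
          rw [sum_w_r j' k hj']
          have hne : (j' : ℕ) ≠ ℓ - 1 := by have := j'.isLt; omega
          simp only [Fin.val_mk, if_neg hne]
          norm_num
        | r' j' k =>
          have hj' : (j' : ℕ) < ℓ := by have := j'.isLt; omega
          rw [sum_w_r' j' k hj']
          have hne : (j' : ℕ) ≠ ℓ - 1 := by have := j'.isLt; omega
          simp only [Fin.val_mk, if_neg hne]
          norm_num
        | s k => exact absurd (hs k) ha
        | c =>
          rw [sum_w_c hlast]
          simp only [Fin.val_mk, if_pos rfl]
          norm_num
        | n j'' =>
          by_cases hj0 : (j'' : ℕ) = 0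
          · rw [sum_w_n0 j'' hj0]
            show (0:ℤ) ≤ if (j'' : ℕ) = ℓ - 1 then 1 else 0
            split <;> norm_num
          · rw [sum_w_n j'' hj0 (by omega)]
            have h1 : (j'' : ℕ) - 1 ≠ ℓ - 1 := by have := j''.isLt; omega
            simp only [Fin.val_mk, if_neg h1]
            split <;> norm_num
  · constructor
    · rintro ⟨l, hneg, hx⟩
      rw [sum_chi hlast l] at hneg
      have hPl : ∀ i : Fin ℓ, ℓ - 1 ≤ (i : ℕ) → l i < 0 := by
        intro i hi
        have : i = ⟨ℓ - 1, hlast⟩ := Fin.ext (by simp only [Fin.val_mk]; have := i.isLt; omega)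
        rw [this]; exact hneg
      have hex : ∃ m : ℕ, ∀ i : Fin ℓ, m ≤ (i : ℕ) → l i < 0 := ⟨ℓ - 1, hPl⟩
      have hPj0 := Nat.find_spec hex
      have hj0le : Nat.find hex ≤ ℓ - 1 := Nat.find_le hPl
      set j0 := Nat.find hex with hj0def
      have hj0lt : j0 < ℓ := by omega
      refine ⟨⟨j0, hj0lt⟩, ?_, ?_, ?_⟩
      · by_contra hne
        have h := hx _ hne
        by_cases h0 : j0 = 0
        · rw [sum_w_n0 ⟨j0, hj0lt⟩ h0] at h
          have := hPj0 ⟨j0, hj0lt⟩ (le_refl _)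
          linarith
        · rw [sum_w_n ⟨j0, hj0lt⟩ h0 (by omega)] at h
          have hlj0 : l ⟨j0, hj0lt⟩ < 0 := hPj0 ⟨j0, hj0lt⟩ (le_refl _)
          have hnotP : ¬ ∀ i : Fin ℓ, j0 - 1 ≤ (i : ℕ) → l i < 0 :=
            Nat.find_min hex (show j0 - 1 < j0 by omega)
          push_neg at hnotP
          obtain ⟨i, hi1, hi2⟩ := hnotP
          have hilt : (i : ℕ) < j0 := by
            by_contra hcon
            exact absurd (hPj0 i (by omega)) (by linarith)
          have : i = (⟨j0 - 1, by omega⟩ : Fin ℓ) := Fin.ext (by simp; omega)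
          rw [this] at hi2
          linarith
      · intro j' hj' k
        by_contra hne
        have h := hx _ hne
        have hj'ℓ : (j' : ℕ) < ℓ := by have := j'.isLt; omega
        rw [sum_w_r' j' k hj'ℓ] at h
        have hlt : l ⟨(j' : ℕ), hj'ℓ⟩ < 0 := hPj0 _ hj'
        have hk : (k : ℤ) ≤ 2 := by have := k.isLt; omega
        nlinarith
      · by_contra hne
        have h := hx _ hne
        rw [sum_w_c hlast] at h
        linarith
    · rintro ⟨j, hn, hr, hc⟩
      refine ⟨fun i => if (j : ℕ) ≤ (i : ℕ) then -1 else 0, ?_, ?_⟩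
      · rw [sum_chi hlast]
        have hle : (j : ℕ) ≤ ℓ - 1 := by have := j.isLt; omega
        simp only [Fin.val_mk, if_pos hle]
        norm_num
      · intro a ha
        cases a with
        | r j' k =>
          have hj' : (j' : ℕ) < ℓ := by have := j'.isLt; omega
          rw [sum_w_r j' k hj']
          have hk : (k : ℤ) ≤ 2 := by have := k.isLt; omega
          simp only [Fin.val_mk]
          split <;> nlinarith
        | r' j' k =>
          by_cases hle : (j : ℕ) ≤ (j' : ℕ)
          · exact absurd (hr j' hle k) ha
          · have hj' : (j' : ℕ) < ℓ := by have := j'.isLt; omega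
            rw [sum_w_r' j' k hj']
            simp only [Fin.val_mk, if_neg hle]
            norm_num
        | s k =>
          rw [sum_w_s k hlast]
          have hle : (j : ℕ) ≤ ℓ - 1 := by have := j.isLt; omega
          have hk : (k : ℤ) ≤ 3 := by have := k.isLt; omega
          simp only [Fin.val_mk, if_pos hle]
          nlinarith
        | c => exact absurd hc ha
        | n j'' =>
          by_cases hj0 : (j'' : ℕ) = 0
          · rw [sum_w_n0 j'' hj0]
            by_cases hle : (j : ℕ) ≤ (j'' : ℕ)
            · have : j = j'' := Fin.ext (by omega)
              exact absurd (this ▸ hn) ha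
            · simp only [if_neg hle]
              norm_num
          · rw [sum_w_n j'' hj0 (by omega)]
            by_cases h1 : (j : ℕ) ≤ (j'' : ℕ) - 1
            · have h2 : (j : ℕ) ≤ (j'' : ℕ) := by omega
              simp only [Fin.val_mk, if_pos h1, if_pos h2]
              norm_num
            · by_cases h2 : (j : ℕ) ≤ (j'' : ℕ)
              · have : j = j'' := Fin.ext (by omega)
                exact absurd (this ▸ hn) ha
              · simp only [Fin.val_mk, if_neg h1, if_neg h2]
                norm_num
end

section
/- Chamber description for a 7/10-link: for the torus T = (ℂ*)^ℓ acting on the affine space with coordinates s_{j,k} (1 ≤ j ≤ ℓ, 0 ≤ k ≤ 2) of weight (k−4)e_j, and n_j (0 ≤ j ≤ ℓ) where n₀ has weight e₁, n_ℓ has weight e_ℓ, and n_j has weight e_j + e_{j+1} for 0 < j < ℓ, with character χ = (1, 1, …, 1): the set of points x admitting λ ∈ ℤ^ℓ with Σ_j λ_j > 0 whose limit on x exists equals ∪_{j=1}^{ℓ} V(s_{j,0}, s_{j,1}, s_{j,2}); and the set of points admitting λ with Σ_j λ_j < 0 whose limit on x exists equals the union of the loci V_{μ,ν} = V(n_ν,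 s_{ν+2,•}, s_{ν+4,•}, …, s_{ν+2μ−2,•}, n_{ν+2μ−1}) over all integers μ ≥ 1 and 0 ≤ ν ≤ ℓ − 2μ + 1. -/
/-- Coordinates on the miniversal deformation space of a 7/10-link of length `ℓ`:
singularity coordinates `s (j, k)` for `1 ≤ j ≤ ℓ` (encoded by `j : Fin ℓ` with value
`j+1`) and `0 ≤ k ≤ 2`, and node coordinates `n j` for `0 ≤ j ≤ ℓ`. -/
inductive LinkCoord710 (ℓ : ℕ) : Type
  | s (j : Fin ℓ) (k : Fin 3)
  | n (j : Fin (ℓ + 1))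

/-- The weight in `ℤ^ℓ` (with `i : Fin ℓ` encoding the basis vector `e_{i+1}`) of each
coordinate: `s_{j,k}` has weight `(k-4)·e_j`, `n_0` has weight `e_1`, `n_ℓ` has weight
`e_ℓ`, and `n_j` has weight `e_j + e_{j+1}` for `0 < j < ℓ`. -/
def linkWeight710 (ℓ : ℕ) : LinkCoord710 ℓ → Fin ℓ → ℤ
  | .s j k => fun i => if (i : ℕ) = (j : ℕ) then (k : ℤ) - 4 else 0
  | .n j => fun i =>
      if (j : ℕ) = 0 then (if (i : ℕ) = 0 then 1 else 0)
      else if (j : ℕ) = ℓ then (if (i : ℕ) = ℓ - 1 then 1 else 0)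
      else if (i : ℕ) = (j : ℕ) - 1 ∨ (i : ℕ) = (j : ℕ) then 1 else 0

namespace Chambers710

lemma sum_indic {ℓ : ℕ} (l : Fin ℓ → ℤ) (m : ℕ) (hm : m < ℓ) :
    (∑ i : Fin ℓ, if (i : ℕ) = m then l i else 0) = l ⟨m, hm⟩ := by
  rw [Finset.sum_eq_single (⟨m, hm⟩ : Fin ℓ)]
  · simp
  · intro b _ hb
    exact if_neg fun h => hb (Fin.ext h)
  · intro h; exact absurd (Finset.mem_univ _) h

lemma wsum_s {ℓ : ℕ} (l : Fin ℓ → ℤ) (j : Fin ℓ) (k : Fin 3) :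
    ∑ i, linkWeight710 ℓ (.s j k) i * l i = ((k : ℤ) - 4) * l j := by
  simp only [linkWeight710, ite_mul, zero_mul]
  have := sum_indic (fun i => ((k : ℤ) - 4) * l i) (j : ℕ) j.isLt
  simpa using this

lemma wsum_n0 {ℓ : ℕ} (l : Fin ℓ → ℤ) (j : Fin (ℓ + 1)) (hj : (j : ℕ) = 0) (h0 : 0 < ℓ) :
    ∑ i, linkWeight710 ℓ (.n j) i * l i = l ⟨0, h0⟩ := by
  have key : ∀ i : Fin ℓ, linkWeight710 ℓ (.n j) i * l i = if (i : ℕ) = 0 then l i else 0 := by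
    intro i
    simp [linkWeight710, hj]
  rw [Finset.sum_congr rfl fun i _ => key i, sum_indic l 0 h0]

lemma wsum_nl {ℓ : ℕ} (l : Fin ℓ → ℤ) (j : Fin (ℓ + 1)) (hj : (j : ℕ) = ℓ) (h0 : 0 < ℓ) :
    ∑ i, linkWeight710 ℓ (.n j) i * l i = l ⟨ℓ - 1, by omega⟩ := by
  have key : ∀ i : Fin ℓ, linkWeight710 ℓ (.n j) i * l i = if (i : ℕ) = ℓ - 1 then l i else 0 := by
    intro i
    simp [linkWeight710, hj, (by omega : ¬ (ℓ = 0))]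
    exact fun h => absurd h (by omega)
  rw [Finset.sum_congr rfl fun i _ => key i, sum_indic l (ℓ-1) (by omega)]

lemma wsum_nmid {ℓ : ℕ} (l : Fin ℓ → ℤ) (j : Fin (ℓ + 1)) (h1 : (j : ℕ) ≠ 0) (h2 : (j : ℕ) ≠ ℓ) :
    ∑ i, linkWeight710 ℓ (.n j) i * l i
      = l ⟨(j : ℕ) - 1, by have := j.isLt; omega⟩ + l ⟨(j : ℕ), by have := j.isLt; omega⟩ := by
  have key : ∀ i : Fin ℓ, linkWeight710 ℓ (.n j) i * l i
      = (if (i : ℕ) = (j : ℕ) - 1 then l i else 0) + (if (i : ℕ) = (j : ℕ) then l i else 0) := by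
    intro i
    by_cases hA : (i : ℕ) = (j : ℕ) - 1
    · have hB : ¬ (i : ℕ) = (j : ℕ) := by omega
      simp [linkWeight710, h1, h2, hA, hB]
      exact fun h => absurd h (by omega)
    · by_cases hB : (i : ℕ) = (j : ℕ)
      · simp [linkWeight710, h1, h2, hA, hB]
        exact fun h => absurd h (by omega)
      · simp [linkWeight710, h1, h2, hA, hB]
  rw [Finset.sum_congr rfl fun i _ => key i, Finset.sum_add_distrib,
    sum_indic l ((j : ℕ) - 1) (by have := j.isLt; omega),
    sum_indic l (j : ℕ) (by have := j.isLt; omega)]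


/-- Prefix-sum profile of the alternating one-parameter subgroup destabilizing the
locus `V(n_ν, s_{ν+2,•}, …, n_{ν+2μ-1})`. -/
def chainG (ν μ : ℕ) (p : ℕ) : ℤ :=
  if p ≤ ν then 0 else if ν + 2 * μ - 1 ≤ p then -1 else if (p - ν) % 2 = 1 then -1 else 0

lemma chainG_total (ℓ ν μ : ℕ) (hμ : 1 ≤ μ) (h : ν + 2 * μ ≤ ℓ + 1) (hl : 1 ≤ ℓ) :
    chainG ν μ ℓ - chainG ν μ 0 < 0 := by
  unfold chainG; split_ifs <;> omega

lemma chainG_step_pos {ν μ p : ℕ} (h : 0 < chainG ν μ (p + 1) - chainG ν μ p) :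
    ν < p ∧ p + 2 < ν + 2 * μ ∧ (p - ν) % 2 = 1 := by
  unfold chainG at h; split_ifs at h <;> omega

lemma chainG_n0 (ν μ : ℕ) (hν : 1 ≤ ν) : 0 ≤ chainG ν μ 1 - chainG ν μ 0 := by
  unfold chainG; split_ifs <;> omega

lemma chainG_nl (ℓ ν μ : ℕ) (hμ : 1 ≤ μ) (h : ν + 2 * μ ≤ ℓ) (hl : 1 ≤ ℓ) :
    0 ≤ chainG ν μ ℓ - chainG ν μ (ℓ - 1) := by
  unfold chainG; split_ifs <;> omega

lemma chainG_mid {ν μ p : ℕ} (hμ : 1 ≤ μ) (hp : 1 ≤ p) (h1 : p ≠ ν) (h2 : p + 1 ≠ ν + 2 * μ) :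
    0 ≤ chainG ν μ (p + 1) - chainG ν μ (p - 1) := by
  unfold chainG; split_ifs <;> omega

/-- Prefix sums of a one-parameter subgroup. -/
def sigmaOf {ℓ : ℕ} (l : Fin ℓ → ℤ) (p : ℕ) : ℤ :=
  ∑ i ∈ Finset.range p, if h : i < ℓ then l ⟨i, h⟩ else 0

lemma sigmaOf_zero {ℓ : ℕ} (l : Fin ℓ → ℤ) : sigmaOf l 0 = 0 := by
  simp [sigmaOf]

lemma sigmaOf_succ {ℓ : ℕ} (l : Fin ℓ → ℤ) {m : ℕ} (hm : m < ℓ) :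
    sigmaOf l (m + 1) = sigmaOf l m + l ⟨m, hm⟩ := by
  unfold sigmaOf
  rw [Finset.sum_range_succ, dif_pos hm]

lemma sigmaOf_top {ℓ : ℕ} (l : Fin ℓ → ℤ) : sigmaOf l ℓ = ∑ i, l i := by
  unfold sigmaOf
  rw [← Fin.sum_univ_eq_sum_range (fun i => if h : i < ℓ then l ⟨i, h⟩ else 0) ℓ]
  exact Finset.sum_congr rfl fun i _ => by simp


/-- Key descent step: given an invariant chain starting at a vanishing node `ν`,
with current front `q` at odd distance from `ν`, negative prefix sum at `q` and
nonnegative prefix sum at `q-1`, produce an unstable locus `V_{μ,ν'}`. -/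
lemma descend (ℓ : ℕ) (x : LinkCoord710 ℓ → ℂ) (σ : ℕ → ℤ)
    (hσℓ : σ ℓ < 0)
    (hmid : ∀ p : ℕ, (hp1 : 1 ≤ p) → (hp2 : p < ℓ) → x (.n ⟨p, by omega⟩) ≠ 0 → σ (p - 1) ≤ σ (p + 1))
    (hlast : x (.n ⟨ℓ, by omega⟩) ≠ 0 → σ (ℓ - 1) ≤ σ ℓ)
    (hS : ∀ (m : ℕ) (hm : m < ℓ), σ m < σ (m + 1) → ∀ k, x (.s ⟨m, hm⟩ k) = 0) :
    ∀ n ν q : ℕ, (hn : ℓ - q ≤ n) → (hνq : ν < q) → (hqℓ : q ≤ ℓ) → (hpar : (q - ν) % 2 = 1) →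
      (hνN : x (.n ⟨ν, by omega⟩) = 0) →
      (hs : ∀ t : Fin ℓ, ν < (t : ℕ) → (t : ℕ) + 1 < q → ((t : ℕ) - ν) % 2 = 1 →
        ∀ k, x (.s t k) = 0) →
      (hσq : σ q < 0) → (hσq1 : 0 ≤ σ (q - 1)) →
      ∃ μ ν' : ℕ, 1 ≤ μ ∧ ν' + 2 * μ ≤ ℓ + 1 ∧
        (∀ j : Fin (ℓ + 1), ((j : ℕ) = ν' ∨ (j : ℕ) + 1 = ν' + 2 * μ) → x (.n j) = 0) ∧
        (∀ j : Fin ℓ, (∃ i : ℕ, 1 ≤ i ∧ i + 1 ≤ μ ∧ (j : ℕ) + 1 = ν' + 2 * i) →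
          ∀ k : Fin 3, x (.s j k) = 0) := by
  intro n
  induction n using Nat.strong_induction_on with
  | _ n ih =>
  intro ν q hn hνq hqℓ hpar hνN hs hσq hσq1
  by_cases hqN : x (.n ⟨q, by omega⟩) = 0
  · refine ⟨(q - ν + 1) / 2, ν, by omega, by omega, ?_, ?_⟩
    · rintro j (hj | hj)
      · have hje : j = ⟨ν, by omega⟩ := Fin.ext hj
        rw [hje]; exact hνN
      · have hjv : (j : ℕ) = q := by omega
        have hje : j = ⟨q, by omega⟩ := Fin.ext hjv
        rw [hje]; exact hqN
    · rintro j ⟨i, hi1, hi2, hi3⟩ k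
      exact hs j (by omega) (by omega) (by omega) k
  · have hq1 : 1 ≤ q := by omega
    have hqlt : q < ℓ := by
      rcases lt_or_eq_of_le hqℓ with h | h
      · exact h
      · exfalso
        subst h
        have := hlast hqN
        linarith
    have hmid' := hmid q hq1 hqlt hqN
    have hq1' : 0 ≤ σ (q + 1) := le_trans hσq1 hmid'
    have hqS : ∀ k, x (.s ⟨q, hqlt⟩ k) = 0 := hS q hqlt (by linarith)
    have hq2 : q + 2 ≤ ℓ := by
      by_contra hcon
      have hqe : q + 1 = ℓ := by omega
      rw [hqe] at hq1'
      linarith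
    by_cases hneg : σ (q + 2) < 0
    · refine ih (n - 1) (by omega) ν (q + 2) (by omega) (by omega) hq2 (by omega) hνN
        ?_ hneg hq1'
      intro t ht1 ht2 ht3 k
      by_cases htq : (t : ℕ) = q
      · have hte : t = ⟨q, hqlt⟩ := Fin.ext htq
        rw [hte]; exact hqS k
      · exact hs t ht1 (by omega) ht3 k
    · push_neg at hneg
      have hex : ∃ d, σ (q + 2 + d) < 0 :=
        ⟨ℓ - (q + 2), by rw [show q + 2 + (ℓ - (q + 2)) = ℓ from by omega]; exact hσℓ⟩
      have hdP : σ (q + 2 + Nat.find hex) < 0 := Nat.find_spec hex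
      have hdmin : ∀ e, e < Nat.find hex → 0 ≤ σ (q + 2 + e) :=
        fun e he => not_lt.mp (Nat.find_min hex he)
      have hdle : Nat.find hex ≤ ℓ - (q + 2) :=
        Nat.find_min' hex (by rw [show q + 2 + (ℓ - (q + 2)) = ℓ from by omega]; exact hσℓ)
      have hd1 : 1 ≤ Nat.find hex := by
        rcases Nat.eq_zero_or_pos (Nat.find hex) with h | h
        · exfalso
          rw [h] at hdP
          simp only [Nat.add_zero] at hdP
          linarith
        · exact h
      set d := Nat.find hex with hd_def
      set b := q + 2 + d with hb_def
      have hbℓ : b ≤ ℓ := by omega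
      have hb1 : 0 ≤ σ (b - 1) := by
        have := hdmin (d - 1) (by omega)
        rw [show q + 2 + (d - 1) = b - 1 from by omega] at this
        exact this
      have hb2 : 0 ≤ σ (b - 2) := by
        rcases eq_or_lt_of_le hd1 with h | h
        · rw [show b - 2 = q + 1 from by omega]
          exact hq1'
        · have := hdmin (d - 2) (by omega)
          rw [show q + 2 + (d - 2) = b - 2 from by omega] at this
          exact this
      have hbN : x (.n ⟨b - 1, by omega⟩) = 0 := by
        by_contra hcon
        have h := hmid (b - 1) (by omega) (by omega) hcon
        rw [show b - 1 - 1 = b - 2 from by omega, show b - 1 + 1 = b from by omega] at h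
        linarith
      refine ih (n - 1) (by omega) (b - 1) b (by omega) (by omega) hbℓ (by omega) hbN
        ?_ hdP hb1
      intro t ht1 ht2 ht3 k
      exact absurd ht2 (by omega)

end Chambers710

open Chambers710

/-- **Chamber description for a 7/10-link.**  For the diagonal action of `T = (ℂ*)^ℓ`
with the weights `linkWeight710` and character `χ = (1, …, 1)`: a point `x` admits a
one-parameter subgroup `l` with `∑ l_j > 0` whose limit on `x` exists if and only if
`x ∈ ⋃_{j=1}^{ℓ} V(s_{j,0}, s_{j,1}, s_{j,2})`; and `x` admits such an `l` with
`∑ l_j < 0` if and only if `x` lies in some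
`V_{μ,ν} = V(n_ν, s_{ν+2,•}, s_{ν+4,•}, …, s_{ν+2μ-2,•}, n_{ν+2μ-1})` with `μ ≥ 1` and
`0 ≤ ν ≤ ℓ - 2μ + 1`. -/
theorem chambers_seven_tenths_link (ℓ : ℕ) (hℓ : 1 ≤ ℓ) (x : LinkCoord710 ℓ → ℂ) :
    ((∃ l : Fin ℓ → ℤ, 0 < ∑ i, l i ∧
        ∀ a : LinkCoord710 ℓ, x a ≠ 0 → 0 ≤ ∑ i, linkWeight710 ℓ a i * l i) ↔
      ∃ j : Fin ℓ, ∀ k : Fin 3, x (.s j k) = 0) ∧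
    ((∃ l : Fin ℓ → ℤ, (∑ i, l i) < 0 ∧
        ∀ a : LinkCoord710 ℓ, x a ≠ 0 → 0 ≤ ∑ i, linkWeight710 ℓ a i * l i) ↔
      ∃ μ ν : ℕ, 1 ≤ μ ∧ ν + 2 * μ ≤ ℓ + 1 ∧
        (∀ j : Fin (ℓ + 1), ((j : ℕ) = ν ∨ (j : ℕ) + 1 = ν + 2 * μ) → x (.n j) = 0) ∧
        (∀ j : Fin ℓ, (∃ i : ℕ, 1 ≤ i ∧ i + 1 ≤ μ ∧ (j : ℕ) + 1 = ν + 2 * i) →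
          ∀ k : Fin 3, x (.s j k) = 0)) := by
  constructor
  · -- Part 1: λ with positive character pairing
    constructor
    · rintro ⟨l, hpos, hall⟩
      by_contra hcon
      push_neg at hcon
      have hle : ∀ j, l j ≤ 0 := by
        intro j
        obtain ⟨k, hk⟩ := hcon j
        have h := hall _ hk
        rw [wsum_s] at h
        by_contra hp
        push_neg at hp
        have hk4 : (k : ℤ) ≤ 2 := by
          have := k.isLt
          omega
        nlinarith [mul_pos (show (0:ℤ) < 4 - (k : ℤ) by linarith) hp]
      have : ∑ i, l i ≤ 0 := Finset.sum_nonpos fun i _ => hle i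
      linarith
    · rintro ⟨j, hj⟩
      refine ⟨fun i => if i = j then 1 else 0, ?_, ?_⟩
      · show (0:ℤ) < ∑ i : Fin ℓ, if i = j then 1 else 0
        rw [Finset.sum_ite_eq' Finset.univ j (fun _ => (1:ℤ))]
        simp
      · intro a ha
        cases a with
        | s j' k =>
          by_cases hjj : j' = j
          · rw [hjj] at ha
            exact absurd (hj k) ha
          · rw [wsum_s]
            show 0 ≤ ((k : ℤ) - 4) * (if j' = j then (1:ℤ) else 0)
            rw [if_neg hjj, mul_zero]
        | n j' =>
          apply Finset.sum_nonneg
          intro i _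
          apply mul_nonneg
          · show 0 ≤ linkWeight710 ℓ (.n j') i
            simp only [linkWeight710]
            split_ifs <;> norm_num
          · show (0:ℤ) ≤ if i = j then 1 else 0
            split_ifs <;> norm_num
  · -- Part 2: λ with negative character pairing
    constructor
    · rintro ⟨l, hneg, hall⟩
      obtain ⟨σ, hσs, hσ0, hσt⟩ : ∃ σ : ℕ → ℤ,
          (∀ (m : ℕ) (hm : m < ℓ), σ (m + 1) = σ m + l ⟨m, hm⟩) ∧ σ 0 = 0 ∧ σ ℓ = ∑ i, l i :=
        ⟨sigmaOf l, fun m hm => sigmaOf_succ l hm, sigmaOf_zero l, sigmaOf_top l⟩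
      have hmid : ∀ p : ℕ, (hp1 : 1 ≤ p) → (hp2 : p < ℓ) →
          x (.n ⟨p, by omega⟩) ≠ 0 → σ (p - 1) ≤ σ (p + 1) := by
        intro p hp1 hp2 hne
        have h := hall (.n ⟨p, by omega⟩) hne
        rw [wsum_nmid l ⟨p, by omega⟩ (by omega : ¬ (p = 0)) (by omega : ¬ (p = ℓ))] at h
        have e1 := hσs (p - 1) (show p - 1 < ℓ by omega)
        conv at e1 => lhs; rw [show p - 1 + 1 = p from by omega]
        have e2 := hσs p hp2
        linarith
      have hlast : x (.n ⟨ℓ, by omega⟩) ≠ 0 → σ (ℓ - 1) ≤ σ ℓ := by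
        intro hne
        have h := hall (.n ⟨ℓ, by omega⟩) hne
        rw [wsum_nl l ⟨ℓ, by omega⟩ rfl (by omega)] at h
        have e := hσs (ℓ - 1) (show ℓ - 1 < ℓ by omega)
        conv at e => lhs; rw [show ℓ - 1 + 1 = ℓ from by omega]
        linarith
      have hS : ∀ (m : ℕ) (hm : m < ℓ), σ m < σ (m + 1) →
          ∀ k, x (.s ⟨m, hm⟩ k) = 0 := by
        intro m hm hlt k
        by_contra hne
        have h := hall (.s ⟨m, hm⟩ k) hne
        rw [wsum_s] at h
        have e := hσs m hm
        have hk4 : (k : ℤ) ≤ 2 := by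
          have := k.isLt
          omega
        have hp : 0 < l ⟨m, hm⟩ := by linarith
        nlinarith [mul_pos (show (0:ℤ) < 4 - (k : ℤ) by linarith) hp]
      have h0 : x (.n ⟨0, by omega⟩) ≠ 0 → 0 ≤ σ 1 := by
        intro hne
        have h := hall (.n ⟨0, by omega⟩) hne
        rw [wsum_n0 l ⟨0, by omega⟩ rfl (by omega)] at h
        have e := hσs 0 (show 0 < ℓ by omega)
        rw [hσ0] at e
        linarith
      have hσℓ : σ ℓ < 0 := by
        rw [hσt]; exact hneg
      have hex : ∃ p, σ p < 0 := ⟨ℓ, hσℓ⟩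
      have hb0P : σ (Nat.find hex) < 0 := Nat.find_spec hex
      have hb0min : ∀ e, e < Nat.find hex → 0 ≤ σ e :=
        fun e he => not_lt.mp (Nat.find_min hex he)
      have hb0le : Nat.find hex ≤ ℓ := Nat.find_min' hex hσℓ
      have hb01 : 1 ≤ Nat.find hex := by
        rcases Nat.eq_zero_or_pos (Nat.find hex) with h | h
        · exfalso
          rw [h, hσ0] at hb0P
          linarith
        · exact h
      set b0 := Nat.find hex with hb0_def
      have hb0N : x (.n ⟨b0 - 1, by omega⟩) = 0 := by
        by_contra hcon
        rcases eq_or_lt_of_le hb01 with h | h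
        · have hb0e : b0 - 1 = 0 := by omega
          have hje : (⟨b0 - 1, by omega⟩ : Fin (ℓ + 1)) = ⟨0, by omega⟩ := Fin.ext hb0e
          rw [hje] at hcon
          have h1 := h0 hcon
          rw [← h] at hb0P
          linarith
        · have h2 := hmid (b0 - 1) (by omega) (by omega) hcon
          have hb2 := hb0min (b0 - 2) (by omega)
          rw [show b0 - 1 - 1 = b0 - 2 from by omega,
            show b0 - 1 + 1 = b0 from by omega] at h2
          linarith
      exact descend ℓ x σ hσℓ hmid hlast hS ℓ (b0 - 1) b0 (by omega) (by omega)
        hb0le (by omega) hb0N (fun t ht1 ht2 ht3 k => absurd ht2 (by omega)) hb0P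
        (hb0min (b0 - 1) (by omega))
    · rintro ⟨μ, ν, hμ, hμν, hN, hSx⟩
      refine ⟨fun i => chainG ν μ ((i : ℕ) + 1) - chainG ν μ (i : ℕ), ?_, ?_⟩
      · show (∑ i : Fin ℓ, (chainG ν μ ((i : ℕ) + 1) - chainG ν μ (i : ℕ))) < 0
        rw [Fin.sum_univ_eq_sum_range (fun i => chainG ν μ (i + 1) - chainG ν μ i) ℓ,
          Finset.sum_range_sub]
        exact chainG_total ℓ ν μ hμ hμν hℓ
      · intro a ha
        cases a with
        | s j k =>
          rw [wsum_s]
          show 0 ≤ ((k : ℤ) - 4) * (chainG ν μ ((j : ℕ) + 1) - chainG ν μ (j : ℕ))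
          rcases le_or_gt (chainG ν μ ((j : ℕ) + 1) - chainG ν μ (j : ℕ)) 0 with hle | hlt
          · have hk4 : (k : ℤ) ≤ 2 := by
              have := k.isLt
              omega
            nlinarith [mul_nonneg (show (0:ℤ) ≤ 4 - (k : ℤ) by linarith)
              (show (0:ℤ) ≤ -(chainG ν μ ((j : ℕ) + 1) - chainG ν μ (j : ℕ)) by linarith)]
          · obtain ⟨h1, h2, h3⟩ := chainG_step_pos hlt
            exact absurd (hSx j ⟨((j : ℕ) + 1 - ν) / 2, by omega, by omega, by omega⟩ k) ha
        | n j =>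
          rcases Nat.eq_zero_or_pos (j : ℕ) with hj0 | hj0
          · rw [wsum_n0 _ j hj0 (by omega)]
            show 0 ≤ chainG ν μ (0 + 1) - chainG ν μ 0
            rcases Nat.eq_zero_or_pos ν with hν | hν
            · exact absurd (hN j (Or.inl (by omega))) ha
            · exact chainG_n0 ν μ hν
          · rcases eq_or_lt_of_le (Nat.lt_succ_iff.mp j.isLt) with hjl | hjl
            · rw [wsum_nl _ j hjl (by omega)]
              show 0 ≤ chainG ν μ (ℓ - 1 + 1) - chainG ν μ (ℓ - 1)
              rw [show ℓ - 1 + 1 = ℓ from by omega]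
              rcases eq_or_lt_of_le hμν with h | h
              · exact absurd (hN j (Or.inr (by omega))) ha
              · exact chainG_nl ℓ ν μ hμ (by omega) hℓ
            · rw [wsum_nmid _ j (by omega) (by omega)]
              show 0 ≤ (chainG ν μ ((j : ℕ) - 1 + 1) - chainG ν μ ((j : ℕ) - 1))
                + (chainG ν μ ((j : ℕ) + 1) - chainG ν μ (j : ℕ))
              rw [show (j : ℕ) - 1 + 1 = (j : ℕ) from by omega]
              have h1 : (j : ℕ) ≠ ν := fun h => ha (hN j (Or.inl h))
              have h2 : (j : ℕ) + 1 ≠ ν + 2 * μ := fun h => ha (hN j (Or.inr h))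
              have := chainG_mid (p := (j : ℕ)) hμ hj0 h1 h2
              linarith
end

section
/- Hodge-index inequality for a section: let g ≥ 2 be an integer and ψ, ι, κ ∈ ℝ. If the determinant of the symmetric matrix M = [[0, 1, 2g−2], [1, −ψ+ι, ψ], [2g−2, ψ, κ]] is nonnegative, then ψ ≥ ((g−1)/g)·ι + κ/(4g(g−1)). -/
/-- **Hodge-index inequality for a section.**  Let `g ≥ 2` be an integer and
`ψ, ι, κ ∈ ℝ`.  If the determinant of the intersection matrix
`[[0, 1, 2g−2], [1, −ψ+ι, ψ], [2g−2, ψ, κ]]` (of the classes `F`, `ξ`, `ω`) is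
nonnegative, then `ψ ≥ ((g−1)/g)·ι + κ/(4g(g−1))`. -/
theorem hodge_index_section (g : ℕ) (hg : 2 ≤ g) (ψ iot κ : ℝ)
    (hdet : 0 ≤ Matrix.det
      (!![0, 1, 2 * (g : ℝ) - 2;
          1, -ψ + iot, ψ;
          2 * (g : ℝ) - 2, ψ, κ] : Matrix (Fin 3) (Fin 3) ℝ)) :
    ψ ≥ ((g : ℝ) - 1) / g * iot + κ / (4 * g * (g - 1)) := by
  simp [Matrix.det_fin_three] at hdet
  have hgr : (2:ℝ) ≤ g := by exact_mod_cast hg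
  have h1 : (0:ℝ) < g := by linarith
  have h2 : (0:ℝ) < (g:ℝ) - 1 := by linarith
  rw [ge_iff_le, div_mul_eq_mul_div, div_add_div _ _ h1.ne' (by positivity),
    div_le_iff₀ (by positivity)]
  nlinarith [mul_pos h1 h2, sq_nonneg ((g:ℝ)-1)]
end

section
/- Hodge-index inequality for a pair of sections: let g ≥ 2 be an integer and Ψ, e, i, κ ∈ ℝ. If the determinant of the symmetric matrix M = [[0, 2, 2g−2], [2, −Ψ + 2e + 2i, Ψ], [2g−2, Ψ, κ]] is nonnegative, then Ψ ≥ (2(g−1)/(g+1))·(e + i) + κ/(g²−1). -/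
/-- **Hodge-index inequality for a pair of sections.**  Let `g ≥ 2` be an integer and
`Ψ, e, i, κ ∈ ℝ`.  If the determinant of the intersection matrix
`[[0, 2, 2g−2], [2, −Ψ+2e+2i, Ψ], [2g−2, Ψ, κ]]` (of the classes `F`, `η⁺+η⁻`, `ω`) is
nonnegative, then `Ψ ≥ (2(g−1)/(g+1))·(e+i) + κ/(g²−1)`. -/
theorem hodge_index_pair_of_sections (g : ℕ) (hg : 2 ≤ g) (Ψ e i κ : ℝ)
    (hdet : 0 ≤ Matrix.det
      (!![0, 2, 2 * (g : ℝ) - 2;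
          2, -Ψ + 2 * e + 2 * i, Ψ;
          2 * (g : ℝ) - 2, Ψ, κ] : Matrix (Fin 3) (Fin 3) ℝ)) :
    Ψ ≥ 2 * ((g : ℝ) - 1) / ((g : ℝ) + 1) * (e + i) + κ / ((g : ℝ) ^ 2 - 1) := by
  have hg' : (2 : ℝ) ≤ (g : ℝ) := by exact_mod_cast hg
  have h1 : (0 : ℝ) < (g : ℝ) - 1 := by linarith
  have h2 : (0 : ℝ) < (g : ℝ) + 1 := by linarith
  have h3 : (0 : ℝ) < (g : ℝ) ^ 2 - 1 := by nlinarith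
  simp [Matrix.det_fin_three] at hdet
  rw [ge_iff_le, div_mul_eq_mul_div, div_add_div _ _ (ne_of_gt h2) (ne_of_gt h3), div_le_iff₀ (by positivity)]
  nlinarith [sq_nonneg ((g:ℝ) - 1), sq_nonneg ((g:ℝ) + 1)]
end

section
/- Let K be a field of characteristic 0 and m ≥ 1 an integer. Consider the K-linear subspace M = { (g(t^m, t), g(−t^m, t)) : g ∈ K[[x, t]] } of K[[t]] × K[[t]], where g(±t^m, t) denotes substitution of x = ±t^m. Then M = { (a, b) ∈ K[[t]] × K[[t]] : a ≡ b (mod t^m) }, and the quotient (K[[t]] × K[[t]])/M is a K-vector space of dimension m. -/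
/-- The substitution `x ↦ ε·t^m` (with `t ↦ t`) applied to a two-variable formal power
series `g ∈ K[[x, t]]` (encoded as `MvPowerSeries (Fin 2) K` with `x` the variable `0`
and `t` the variable `1`): the coefficient of `t^n` in `g(ε t^m, t)` is
`∑_{m·i + j = n} ε^i · g_{i,j}`. -/
noncomputable def substPow {K : Type*} [Field K] (m : ℕ) (ε : K)
    (g : MvPowerSeries (Fin 2) K) : PowerSeries K :=
  PowerSeries.mk fun n =>
    ∑ i ∈ Finset.range (n + 1),
      if m * i ≤ n then
        ε ^ i * MvPowerSeries.coeff (Finsupp.single 0 i + Finsupp.single 1 (n - m * i)) g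
      else 0

/-- The subspace `M = { (g(t^m, t), g(−t^m, t)) : g ∈ K[[x, t]] }` of
`K[[t]] × K[[t]]`. -/
noncomputable def tacnodeImage (K : Type*) [Field K] (m : ℕ) :
    Set (PowerSeries K × PowerSeries K) :=
  {p | ∃ g : MvPowerSeries (Fin 2) K, p = (substPow m 1 g, substPow m (-1) g)}

/-!
Below `t^m` the substitutions `x ↦ ±t^m` only see the `x`-free part of `g`, so both
components of a point of the image agree modulo `t^m`. Conversely, if `a - b = t^m w`
then `g = (a + b)/2 + x·w/2` maps to `(a, b)`. Hence the image is the kernel of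
`(a, b) ↦ (a - b) mod t^m`, a map onto `K^m` split by `c ↦ (∑ cᵢ tⁱ, 0)`.
-/

open PowerSeries

section Splitting

variable {R V W : Type*} [Semiring R] [AddCommGroup V] [AddCommGroup W] [Module R V]
  [Module R W]

theorem LinearMap.existsUnique_sub_mem_ker_of_rightInverse (f : V →ₗ[R] W) {σ : W → V}
    (hσ : ∀ w, f (σ w) = w) (p : V) : ∃! w, p - σ w ∈ LinearMap.ker f := by
  refine ⟨f p, by simp [hσ], fun w (hw : p - σ w ∈ LinearMap.ker f) => ?_⟩
  rw [LinearMap.mem_ker, map_sub, hσ, sub_eq_zero] at hw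
  exact hw.symm

end Splitting

section Substitution

variable {K : Type*} [Field K] {m : ℕ}

theorem coeff_substPow_of_lt (ε : K) (g : MvPowerSeries (Fin 2) K) {k : ℕ}
    (hk : k < m) : coeff k (substPow m ε g) = MvPowerSeries.coeff (Finsupp.single 1 k) g := by
  rw [substPow, coeff_mk, Finset.sum_eq_single_of_mem 0 (Finset.mem_range.2 k.succ_pos)]
  · simp
  · intro i _ hi
    have : m ≤ m * i := Nat.le_mul_of_pos_right m (Nat.pos_of_ne_zero hi)
    rw [if_neg (by omega)]

/-- The series `u(t) + x·w(t) ∈ K[[x, t]]`. -/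
noncomputable def linearInX (u w : PowerSeries K) : MvPowerSeries (Fin 2) K := fun d =>
  if d 0 = 0 then coeff (d 1) u else if d 0 = 1 then coeff (d 1) w else 0

theorem coeff_linearInX (u w : PowerSeries K) (i j : ℕ) :
    MvPowerSeries.coeff (Finsupp.single 0 i + Finsupp.single 1 j) (linearInX u w) =
      if i = 0 then coeff j u else if i = 1 then coeff j w else 0 := by
  simp [linearInX, MvPowerSeries.coeff_apply]

-- `substPow` only sums over `i ≤ n`, so it is the substitution `x ↦ ε t^m` only for `0 < m`.
theorem substPow_linearInX (hm : 0 < m) (ε : K) (u w : PowerSeries K) :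
    substPow m ε (linearInX u w) = u + ε • (X ^ m * w) := by
  ext n
  rw [substPow, coeff_mk, map_add, map_smul, coeff_X_pow_mul', smul_eq_mul, mul_ite, mul_zero]
  rw [Finset.sum_eq_add 0 1 zero_ne_one]
  · simp only [coeff_linearInX]
    simp
  · intro i _ hi
    rw [coeff_linearInX, if_neg hi.1, if_neg hi.2]
    simp
  · simp
  · intro h1
    rw [if_neg (by simp at h1; omega)]

theorem exists_substPow_eq (h2 : (2 : K) ≠ 0) (hm : 0 < m) {a b : PowerSeries K}
    (hab : X ^ m ∣ a - b) : ∃ g, substPow m 1 g = a ∧ substPow m (-1) g = b := by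
  obtain ⟨w, hw⟩ := hab
  refine ⟨linearInX ((2 : K)⁻¹ • (a + b)) ((2 : K)⁻¹ • w), ?_, ?_⟩ <;>
    rw [substPow_linearInX hm, mul_smul_comm, ← hw] <;>
    match_scalars <;> field_simp <;> ring

end Substitution

noncomputable def lowCoeffDiff (R : Type*) [CommRing R] (m : ℕ) :
    PowerSeries R × PowerSeries R →ₗ[R] Fin m → R :=
  LinearMap.pi fun k => coeff k ∘ₗ (LinearMap.fst R _ _ - LinearMap.snd R _ _)

section Kernel

variable {R : Type*} [CommRing R]

theorem mem_ker_lowCoeffDiff {m : ℕ} {p : PowerSeries R × PowerSeries R} :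
    p ∈ LinearMap.ker (lowCoeffDiff R m) ↔ ∀ k < m, coeff k p.1 = coeff k p.2 := by
  simp [lowCoeffDiff, funext_iff, Fin.forall_iff, sub_eq_zero]

theorem lowCoeffDiff_monomial_one (m : ℕ) (i : Fin m) :
    lowCoeffDiff R m (monomial i 1, 0) = Pi.single i 1 := by
  ext k
  simp [lowCoeffDiff, coeff_monomial, Pi.single_apply, Fin.val_inj]

theorem lowCoeffDiff_sum_smul_monomial (m : ℕ) (c : Fin m → R) :
    lowCoeffDiff R m (∑ i, c i • (monomial i 1, 0)) = c := by
  simp only [map_sum, map_smul, lowCoeffDiff_monomial_one, ← Pi.single_smul', smul_eq_mul,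
    mul_one, Finset.univ_sum_single]

end Kernel

theorem tacnodeImage_eq_ker {K : Type*} [Field K] (h2 : (2 : K) ≠ 0) {m : ℕ} (hm : 0 < m) :
    tacnodeImage K m = LinearMap.ker (lowCoeffDiff K m) := by
  ext p
  rw [SetLike.mem_coe, mem_ker_lowCoeffDiff]
  constructor
  · rintro ⟨g, rfl⟩ k hk
    rw [coeff_substPow_of_lt _ _ hk, coeff_substPow_of_lt _ _ hk]
  · intro hp
    obtain ⟨g, h₁, h₂⟩ := exists_substPow_eq (a := p.1) (b := p.2) h2 hm
      (X_pow_dvd_iff.2 fun k hk => by rw [map_sub, hp k hk, sub_self])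
    exact ⟨g, by rw [h₁, h₂]⟩

/-- **Local contribution of a tacnode which is the limit of two outer nodes.**  Let `K`
be a field of characteristic `0` and `m ≥ 1`.  The `K`-linear subspace
`M = { (g(t^m, t), g(−t^m, t)) : g ∈ K[[x, t]] }` of `K[[t]] × K[[t]]` (it is indeed
closed under addition and scalar multiplication) equals
`{ (a, b) : a ≡ b (mod t^m) }`, and the quotient `(K[[t]] × K[[t]])/M` is a `K`-vector
space of dimension `m`: there are `m` vectors whose classes give a basis, i.e. every
element has a unique decomposition as an element of `M` plus a combination of them. -/
theorem tacnodeImage_eq_and_quotient_dim {K : Type*} [Field K] [CharZero K]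
    (m : ℕ) (hm : 1 ≤ m) :
    (∀ p ∈ tacnodeImage K m, ∀ q ∈ tacnodeImage K m, p + q ∈ tacnodeImage K m) ∧
    (∀ (c : K), ∀ p ∈ tacnodeImage K m, c • p ∈ tacnodeImage K m) ∧
    tacnodeImage K m =
      {p : PowerSeries K × PowerSeries K |
        ∀ k < m, PowerSeries.coeff k p.1 = PowerSeries.coeff k p.2} ∧
    ∃ v : Fin m → PowerSeries K × PowerSeries K,
      ∀ p : PowerSeries K × PowerSeries K,
        ∃! c : Fin m → K, p - ∑ i, c i • v i ∈ tacnodeImage K m := by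
  rw [tacnodeImage_eq_ker two_ne_zero hm]
  refine ⟨fun p hp q hq => add_mem hp hq, fun c p hp => Submodule.smul_mem _ c hp,
    Set.ext fun p => mem_ker_lowCoeffDiff, fun i => (monomial i 1, 0),
    (lowCoeffDiff K m).existsUnique_sub_mem_ker_of_rightInverse
      (lowCoeffDiff_sum_smul_monomial m)⟩
end
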